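/- arXiv:1410.7950 — 4 statements merged into one kernel-verified Lean document; each statement's English description precedes it below -/
import Mathlib

section
/- If the symplectically induced hamiltonian G-space Ind_H^G Y is homogeneous (G acts transitively on it), then the hamiltonian H-space Y is homogeneous (H acts transitively on Y). -/
theorem stmt_4 {G : Type*} [Group G]
    {𝔤 : Type*} [AddCommGroup 𝔤] [Module ℝ 𝔤] [FiniteDimensional ℝ 𝔤]
    (coad : G →* (Module.Dual ℝ 𝔤 ≃ₗ[ℝ] Module.Dual ℝ 𝔤))
    (H : Subgroup G) (𝔥 : Submodule ℝ 𝔤)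
    (coadH : H →* (Module.Dual ℝ 𝔥 ≃ₗ[ℝ] Module.Dual ℝ 𝔥))
    (hres : ∀ (h : H) (m : Module.Dual ℝ 𝔤),
      (coad (h : G) m).comp 𝔥.subtype = coadH h (m.comp 𝔥.subtype))
    {Y : Type*} [MulAction H Y]
    (Ψ : Y → Module.Dual ℝ 𝔥)
    (hΨ : ∀ (h : H) (y : Y), Ψ (h • y) = coadH h (Ψ y))
    -- G acts transitively on Ind_H^G Y = ψ⁻¹(0)/H :
    (htrans : ∀ (q q' : G) (m m' : Module.Dual ℝ 𝔤) (y y' : Y),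
      m.comp 𝔥.subtype = Ψ y → m'.comp 𝔥.subtype = Ψ y' →
      ∃ (g : G) (h : H),
        (q', m', y') = (g * q * (h : G)⁻¹, coad (h : G) m, h • y)) :
    -- then H acts transitively on Y :
    ∀ y y' : Y, ∃ h : H, y' = h • y := by
  intro y y'
  obtain ⟨m, hm⟩ := LinearMap.exists_extend (p := 𝔥) (Ψ y)
  obtain ⟨m', hm'⟩ := LinearMap.exists_extend (p := 𝔥) (Ψ y')
  obtain ⟨g, h, heq⟩ := htrans 1 1 m m' y y' hm hm'
  exact ⟨h, congrArg (fun t => t.2.2) heq⟩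
end

section
/- Let 𝔫 be an ideal of a Lie algebra 𝔤, č ∈ 𝔤*, c = č|_𝔫, and Z ∈ 𝔫_c (i.e. Z ∈ 𝔫 with ⟨c,[𝔫,Z]⟩ = 0). Then ad(Z)ⁿ(𝔤) ⊆ [𝔫_c, 𝔫] for all n ≥ 2, and consequently for the coadjoint action, ⟨exp(Z)(č), Z'⟩ = ⟨č + Z(č), Z'⟩ for all Z' ∈ 𝔤, i.e. exp(Z) acts on č as translation by Z(č) = ⟨č,[·,Z]⟩. -/
/-! Since `Z ∈ 𝔫` and `𝔫` is an ideal, for `n ≥ 2` we have `ad(Z)ⁿ W = ⁅Z, ad(Z)ⁿ⁻¹ W⁆` with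
`ad(Z)ⁿ⁻¹ W ∈ 𝔫`; this is a bracket of `Z ∈ 𝔫_c` with an element of `𝔫`, on which `m`
vanishes. Hence the exponential series for the coadjoint action stops after its linear term. -/

open LieAlgebra

section

variable {R L : Type*} [CommRing R] [LieRing L] [LieAlgebra R L]

lemma ad_pow_succ_apply_eq_lie (Z W : L) (n : ℕ) :
    (ad R L Z ^ (n + 1)) W = ⁅Z, (ad R L Z ^ n) W⁆ := by
  rw [pow_succ', Module.End.mul_apply, ad_apply]

lemma LieIdeal.ad_pow_succ_apply_mem {I : LieIdeal R L} {Z : L} (hZ : Z ∈ I) (n : ℕ) (W : L) :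
    (ad R L Z ^ (n + 1)) W ∈ I := by
  rw [ad_pow_succ_apply_eq_lie]
  exact lie_mem_left R L I Z _ hZ

lemma LieIdeal.apply_ad_pow_add_two_apply_eq_zero {I : LieIdeal R L} (m : Module.Dual R L)
    {Z : L} (hZ : Z ∈ I) (hZc : ∀ W ∈ I, m ⁅W, Z⁆ = 0) (n : ℕ) (W : L) :
    m ((ad R L Z ^ (n + 2)) W) = 0 := by
  rw [ad_pow_succ_apply_eq_lie, ← lie_skew, map_neg, hZc _ (I.ad_pow_succ_apply_mem hZ n W),
    neg_zero]

end

lemma tsum_eq_add_of_eq_zero_of_two_le {α : Type*} [AddCommMonoid α] [TopologicalSpace α]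
    (f : ℕ → α) (hf : ∀ n, 2 ≤ n → f n = 0) : ∑' n, f n = f 0 + f 1 := by
  rw [tsum_eq_sum (s := Finset.range 2) fun n hn ↦ hf n (not_lt.mp (Finset.mem_range.not.mp hn)),
    Finset.sum_range_succ, Finset.sum_range_one]

theorem stmt_13 {𝔤 : Type*} [LieRing 𝔤] [LieAlgebra ℝ 𝔤]
    (𝔫 : LieIdeal ℝ 𝔤) (m : Module.Dual ℝ 𝔤)
    (Z : 𝔤) (hZ𝔫 : Z ∈ 𝔫)
    (hZc : ∀ W ∈ 𝔫, m ⁅W, Z⁆ = 0) :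
    (∀ n : ℕ, 2 ≤ n → ∀ W : 𝔤,
      ((LieAlgebra.ad ℝ 𝔤 Z) ^ n) W ∈
        Submodule.span ℝ {V : 𝔤 | ∃ A ∈ 𝔫, (∀ W' ∈ 𝔫, m ⁅W', A⁆ = 0) ∧
          ∃ B ∈ 𝔫, V = ⁅A, B⁆}) ∧
    ∀ Z' : 𝔤,
      (∑' n : ℕ, ((-1 : ℝ) ^ n / n.factorial) •
          m (((LieAlgebra.ad ℝ 𝔤 Z) ^ n) Z'))
        = m Z' + m ⁅Z', Z⁆ := by
  refine ⟨fun n hn W ↦ ?_, fun Z' ↦ ?_⟩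
  · obtain ⟨k, rfl⟩ := Nat.exists_eq_add_of_le' hn
    refine Submodule.subset_span ⟨Z, hZ𝔫, hZc, _, 𝔫.ad_pow_succ_apply_mem hZ𝔫 k W, ?_⟩
    exact ad_pow_succ_apply_eq_lie Z W (k + 1)
  · rw [tsum_eq_add_of_eq_zero_of_two_le _ fun n hn ↦ ?_]
    · simp only [pow_zero, pow_one, Nat.factorial_zero, Nat.factorial_one, Nat.cast_one,
        div_one, one_smul, neg_smul, Module.End.one_apply, ad_apply, ← lie_skew Z' Z, map_neg]
    · obtain ⟨k, rfl⟩ := Nat.exists_eq_add_of_le' hn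
      rw [𝔫.apply_ad_pow_add_two_apply_eq_zero m hZ𝔫 hZc, smul_zero]
end

section
/- Let G be a reductive matrix Lie group, x ∈ 𝔤 ≅ 𝔤* via the trace form, x_h its hyperbolic part, 𝔲 = ⊕_{a>0} 𝔤^a the sum of positive eigenspaces of ad(x_h), and 𝔮 = 𝔤^0 ⊕ 𝔲. Then the annihilator of 𝔮 with respect to the trace form is 𝔲, and ad(x) maps 𝔲 onto 𝔲; consequently 𝔲(x) = {[x,Z] : Z ∈ 𝔲} equals ann(𝔮), so 𝔮 is coisotropic at x. -/
/-!
The trace form is invariant under `ad x_h`, so it pairs `𝔤^a` and `𝔤^b` trivially unless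
`a + b = 0`; in particular `𝔲 ⊥ 𝔮`. Conversely, if `Z ∈ 𝔤` is orthogonal to `𝔮`, its component
`W` in `⊕_{a ≤ 0} 𝔤^a` is orthogonal both to `𝔮` and to `⊕_{a < 0} 𝔤^a`, hence to `Wᵀ ∈ 𝔤`,
and `tr (W Wᵀ) = 0` forces `W = 0`.

Since `[x_h, x] = 0`, `ad x` preserves every `𝔤^a`; its kernel in `𝔤` lies in `𝔤^0`, which meets
`𝔲` trivially, so `ad x` is injective, hence bijective, on the finite-dimensional space `𝔲`.
-/

attribute [local instance 100] LieRing.ofAssociativeRing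

open Matrix Module End Set LieAlgebra

theorem Module.End.ker_sub_smul_id_eq_eigenspace {R M : Type*} [CommRing R] [AddCommGroup M]
    [Module R M] (f : End R M) (a : R) :
    LinearMap.ker (f - a • LinearMap.id) = f.eigenspace a := by
  rw [eigenspace_def, one_eq_id]

theorem lie_mem_eigenspace_ad_add {R L : Type*} [CommRing R] [LieRing L] [LieAlgebra R L]
    {h X Y : L} {a b : R} (hX : X ∈ (ad R L h).eigenspace a)
    (hY : Y ∈ (ad R L h).eigenspace b) :
    ⁅X, Y⁆ ∈ (ad R L h).eigenspace (a + b) := by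
  rw [mem_eigenspace_iff, ad_apply] at hX hY ⊢
  rw [leibniz_lie, hX, hY, smul_lie, lie_smul, add_smul]

section TraceForm

variable {ι K : Type*} [Fintype ι] [DecidableEq ι] [Field K]

theorem trace_mul_eq_zero_of_mem_eigenspace_ad {h Z W : Matrix ι ι K} {a b : K}
    (hab : a + b ≠ 0) (hZ : Z ∈ (ad K _ h).eigenspace a) (hW : W ∈ (ad K _ h).eigenspace b) :
    (Z * W).trace = 0 := by
  rw [mem_eigenspace_iff, ad_apply] at hZ hW
  have hlie : ⁅h, Z * W⁆ = (a + b) • (Z * W) := by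
    rw [add_smul, ← smul_mul_assoc, ← mul_smul_comm, ← hZ, ← hW]
    simp only [Ring.lie_def]
    noncomm_ring
  have htrace := congrArg trace hlie
  rw [matrix_trace_commutator_zero, trace_smul, smul_eq_mul, eq_comm, mul_eq_zero] at htrace
  exact htrace.resolve_left hab

theorem trace_mul_eq_zero_of_mem_iSup_eigenspace_ad {h Z W : Matrix ι ι K} {S T : Set K}
    (hST : ∀ a ∈ S, ∀ b ∈ T, a + b ≠ 0) (hZ : Z ∈ ⨆ a ∈ S, (ad K _ h).eigenspace a)
    (hW : W ∈ ⨆ b ∈ T, (ad K _ h).eigenspace b) :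
    (Z * W).trace = 0 := by
  let B := (LinearMap.mul K (Matrix ι ι K)).compr₂ (traceLinearMap ι K K)
  have hB : Submodule.map₂ B (⨆ a ∈ S, (ad K _ h).eigenspace a)
      (⨆ b ∈ T, (ad K _ h).eigenspace b) = ⊥ := by
    simp only [Submodule.map₂_iSup_left, Submodule.map₂_iSup_right, iSup_eq_bot]
    intro b hb a ha
    refine eq_bot_iff.2 (Submodule.map₂_le.2 fun Z hZ W hW => ?_)
    exact (Submodule.mem_bot K).2 (trace_mul_eq_zero_of_mem_eigenspace_ad (hST a ha b hb) hZ hW)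
  have hZW := Submodule.apply_mem_map₂ B hZ hW
  rwa [hB, Submodule.mem_bot] at hZW

end TraceForm

def traceAnnihilator {ι R : Type*} [Fintype ι] [CommRing R] (𝔤 q : Submodule R (Matrix ι ι R)) :
    Set (Matrix ι ι R) :=
  {Z | Z ∈ 𝔤 ∧ ∀ W ∈ q, (Z * W).trace = 0}

section Annihilator

variable {ι : Type*} [Fintype ι] [DecidableEq ι] {𝔤 : Submodule ℝ (Matrix ι ι ℝ)}
  {h : Matrix ι ι ℝ} {E : ℝ → Submodule ℝ (Matrix ι ι ℝ)}

theorem mem_iSup_pos_of_forall_trace_mul_eq_zero (hΘ : ∀ Z ∈ 𝔤, Zᵀ ∈ 𝔤)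
    (hE : ∀ a, E a ≤ (ad ℝ _ h).eigenspace a) (hdiag : ⨆ a, E a = 𝔤) {Z : Matrix ι ι ℝ}
    (hZ : Z ∈ 𝔤) (hZq : ∀ W ∈ ⨆ a ∈ Ici 0, E a, (Z * W).trace = 0) :
    Z ∈ ⨆ a ∈ Ioi 0, E a := by
  have heig : ∀ s : Set ℝ, ⨆ a ∈ s, E a ≤ ⨆ a ∈ s, (ad ℝ _ h).eigenspace a :=
    fun s => iSup₂_mono fun a _ => hE a
  have hsplit : ∀ s : Set ℝ, 𝔤 = (⨆ a ∈ s, E a) ⊔ ⨆ a ∈ sᶜ, E a :=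
    fun s => hdiag ▸ iSup_split E (· ∈ s)
  rw [hsplit (Ioi 0), compl_Ioi, Submodule.mem_sup] at hZ
  obtain ⟨U, hU, W, hW, rfl⟩ := hZ
  have hWq : ∀ Q ∈ ⨆ a ∈ Ici 0, E a, (W * Q).trace = 0 := by
    intro Q hQ
    have hUQ : (U * Q).trace = 0 := trace_mul_eq_zero_of_mem_iSup_eigenspace_ad
      (fun a ha b hb => (add_pos_of_pos_of_nonneg ha hb).ne') (heig _ hU) (heig _ hQ)
    simpa [add_mul, hUQ] using hZq Q hQ
  have hWT : Wᵀ ∈ 𝔤 := hΘ W (hdiag ▸ (iSup₂_le fun a _ => le_iSup E a) hW)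
  rw [hsplit (Ici 0), compl_Ici, Submodule.mem_sup] at hWT
  obtain ⟨Q, hQ, N, hN, hWQN⟩ := hWT
  have hWN : (W * N).trace = 0 := trace_mul_eq_zero_of_mem_iSup_eigenspace_ad
    (fun a ha b hb => (add_neg_of_nonpos_of_neg ha hb).ne) (heig _ hW) (heig _ hN)
  have hW0 : W = 0 := by
    rw [← trace_mul_conjTranspose_self_eq_zero_iff, conjTranspose_eq_transpose_of_trivial,
      ← hWQN, mul_add, trace_add, hWq Q hQ, hWN, add_zero]
  rwa [hW0, add_zero]

theorem traceAnnihilator_iSup_nonneg_eq (hΘ : ∀ Z ∈ 𝔤, Zᵀ ∈ 𝔤)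
    (hE : ∀ a, E a ≤ (ad ℝ _ h).eigenspace a) (hdiag : ⨆ a, E a = 𝔤) :
    traceAnnihilator 𝔤 (⨆ a ∈ Ici 0, E a) = ↑(⨆ a ∈ Ioi 0, E a) := by
  ext Z
  refine ⟨fun hZ => mem_iSup_pos_of_forall_trace_mul_eq_zero hΘ hE hdiag hZ.1 hZ.2,
    fun hZ => ⟨hdiag ▸ (iSup₂_le fun a _ => le_iSup E a) hZ, fun W hW => ?_⟩⟩
  exact trace_mul_eq_zero_of_mem_iSup_eigenspace_ad
    (fun a ha b hb => (add_pos_of_pos_of_nonneg ha hb).ne')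
    (iSup₂_mono (fun a _ => hE a) hZ) (iSup₂_mono (fun a _ => hE a) hW)

end Annihilator

theorem image_lie_iSup_eigenspace_eq {K L : Type*} [Field K] [LieRing L] [LieAlgebra K L]
    [FiniteDimensional K L] {𝔤 : LieSubalgebra K L} {h x : L} {E : K → Submodule K L}
    (hE : ∀ a, E a = 𝔤.toSubmodule ⊓ (ad K L h).eigenspace a)
    (hx : x ∈ 𝔤) (hx0 : x ∈ E 0) (hcomm : ∀ Z ∈ 𝔤, ⁅x, Z⁆ = 0 → Z ∈ E 0)
    {S : Set K} (hS : 0 ∉ S) :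
    (fun Z => ⁅x, Z⁆) '' ((⨆ a ∈ S, E a : Submodule K L) : Set L) = ↑(⨆ a ∈ S, E a) := by
  have hmaps : ∀ Z ∈ ⨆ a ∈ S, E a, ad K L x Z ∈ ⨆ a ∈ S, E a := by
    suffices ∀ a ∈ S, E a ≤ (⨆ a ∈ S, E a).comap (ad K L x) from
      fun Z hZ => iSup₂_le this hZ
    intro a ha Z hZ
    rw [hE, Submodule.mem_inf] at hx0 hZ
    have hxZ : ⁅x, Z⁆ ∈ E a := by
      rw [hE, Submodule.mem_inf]
      exact ⟨𝔤.lie_mem hx hZ.1, zero_add a ▸ lie_mem_eigenspace_ad_add hx0.2 hZ.2⟩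
    exact le_biSup E ha hxZ
  have hinj : Set.InjOn (ad K L x) ↑(⨆ a ∈ S, E a) := by
    rw [← LinearMap.disjoint_ker_iff_injOn, Submodule.disjoint_def]
    intro Z hZ hZker
    have hZ𝔤 : Z ∈ 𝔤 := iSup₂_le (fun a _ => (hE a).trans_le inf_le_left) hZ
    have hZ0 : Z ∈ (ad K L h).eigenspace 0 := by
      have hZE0 := hcomm Z hZ𝔤 hZker
      rw [hE, Submodule.mem_inf] at hZE0
      exact hZE0.2
    have hZS : Z ∈ ⨆ a ∈ S, (ad K L h).eigenspace a :=
      iSup₂_mono (fun a _ => (hE a).trans_le inf_le_right) hZ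
    exact Submodule.disjoint_def.1 ((eigenspaces_iSupIndep _).disjoint_biSup hS) Z hZ0 hZS
  exact ((LinearMap.injOn_iff_surjOn hmaps).1 hinj).image_eq_of_mapsTo hmaps


theorem stmt_17_general {n : ℕ}
    (𝔤 : LieSubalgebra ℝ (Matrix (Fin n) (Fin n) ℝ))
    (hΘ : ∀ Z ∈ 𝔤, Z.transpose ∈ 𝔤)
    (x xh : Matrix (Fin n) (Fin n) ℝ) (hx : x ∈ 𝔤)
    (E : ℝ → Submodule ℝ (Matrix (Fin n) (Fin n) ℝ))
    (hE : ∀ a, E a = (𝔤 : Submodule ℝ (Matrix (Fin n) (Fin n) ℝ)) ⊓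
      LinearMap.ker (LieAlgebra.ad ℝ (Matrix (Fin n) (Fin n) ℝ) xh
        - a • LinearMap.id))
    -- x_h hyperbolic: 𝔤 decomposes into eigenspaces of ad(x_h)
    (hdiag : (⨆ a : ℝ, E a) = (𝔤 : Submodule ℝ (Matrix (Fin n) (Fin n) ℝ)))
    -- x commutes with its hyperbolic part, so x ∈ 𝔤^0
    (hx0 : x ∈ E 0)
    -- the commutant of x commutes with x_h: 𝔤_x ⊆ 𝔤_{x_h} = 𝔤^0
    (hcomm : ∀ Z ∈ 𝔤, ⁅x, Z⁆ = 0 → Z ∈ E 0)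
    -- 𝔲 = sum of the positive eigenspaces, 𝔮 = 𝔤^0 ⊕ 𝔲
    (u q : Submodule ℝ (Matrix (Fin n) (Fin n) ℝ))
    (hu : u = ⨆ a : ℝ, ⨆ _ : 0 < a, E a)
    (hq : q = E 0 ⊔ u) :
    -- (i) ann(𝔮) = 𝔲 :
    ({Z | Z ∈ 𝔤 ∧ ∀ W ∈ q, (Z * W).trace = 0} = (u : Set (Matrix (Fin n) (Fin n) ℝ))) ∧
    -- (ii) ad(x) maps 𝔲 onto 𝔲, i.e. 𝔲(x) = 𝔲 :
    ({Y | ∃ Z ∈ u, Y = ⁅x, Z⁆} = (u : Set (Matrix (Fin n) (Fin n) ℝ))) ∧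
    -- consequently 𝔲(x) = ann(𝔮): 𝔮 is coisotropic at x
    ({Y | ∃ Z ∈ u, Y = ⁅x, Z⁆}
      = {Z | Z ∈ 𝔤 ∧ ∀ W ∈ q, (Z * W).trace = 0}) := by
  simp_rw [ker_sub_smul_id_eq_eigenspace] at hE
  have hu' : u = ⨆ a ∈ Ioi 0, E a := hu
  have hq' : q = ⨆ a ∈ Ici 0, E a := by rw [hq, hu', ← Ioi_insert, iSup_insert]
  have hann : traceAnnihilator 𝔤.toSubmodule q = u := by
    rw [hq', hu']
    exact traceAnnihilator_iSup_nonneg_eq hΘ (fun a => (hE a).trans_le inf_le_right) hdiag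
  have himage : {Y | ∃ Z ∈ u, Y = ⁅x, Z⁆} = (u : Set (Matrix (Fin n) (Fin n) ℝ)) := by
    have himage_eq := image_lie_iSup_eigenspace_eq hE hx hx0 hcomm (S := Ioi 0) (by simp)
    rw [← hu'] at himage_eq
    rw [← himage_eq]
    ext Y
    simp [eq_comm]
  exact ⟨hann, himage, himage.trans hann.symm⟩

theorem stmt_17 {n : ℕ}
    (𝔤 : LieSubalgebra ℝ (Matrix (Fin n) (Fin n) ℝ))
    (hΘ : ∀ Z ∈ 𝔤, Z.transpose ∈ 𝔤)
    (x xh : Matrix (Fin n) (Fin n) ℝ) (hx : x ∈ 𝔤) (hxh : xh ∈ 𝔤)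
    (E : ℝ → Submodule ℝ (Matrix (Fin n) (Fin n) ℝ))
    (hE : ∀ a, E a = (𝔤 : Submodule ℝ (Matrix (Fin n) (Fin n) ℝ)) ⊓
      LinearMap.ker (LieAlgebra.ad ℝ (Matrix (Fin n) (Fin n) ℝ) xh
        - a • LinearMap.id))
    -- x_h hyperbolic: 𝔤 decomposes into eigenspaces of ad(x_h)
    (hdiag : (⨆ a : ℝ, E a) = (𝔤 : Submodule ℝ (Matrix (Fin n) (Fin n) ℝ)))
    -- x commutes with its hyperbolic part, so x ∈ 𝔤^0
    (hx0 : x ∈ E 0)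
    -- the commutant of x commutes with x_h: 𝔤_x ⊆ 𝔤_{x_h} = 𝔤^0
    (hcomm : ∀ Z ∈ 𝔤, ⁅x, Z⁆ = 0 → Z ∈ E 0)
    -- 𝔲 = sum of the positive eigenspaces, 𝔮 = 𝔤^0 ⊕ 𝔲
    (u q : Submodule ℝ (Matrix (Fin n) (Fin n) ℝ))
    (hu : u = ⨆ a : ℝ, ⨆ _ : 0 < a, E a)
    (hq : q = E 0 ⊔ u) :
    -- (i) ann(𝔮) = 𝔲 :
    ({Z | Z ∈ 𝔤 ∧ ∀ W ∈ q, (Z * W).trace = 0} = (u : Set (Matrix (Fin n) (Fin n) ℝ))) ∧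
    -- (ii) ad(x) maps 𝔲 onto 𝔲, i.e. 𝔲(x) = 𝔲 :
    ({Y | ∃ Z ∈ u, Y = ⁅x, Z⁆} = (u : Set (Matrix (Fin n) (Fin n) ℝ))) ∧
    -- consequently 𝔲(x) = ann(𝔮): 𝔮 is coisotropic at x
    ({Y | ∃ Z ∈ u, Y = ⁅x, Z⁆}
      = {Z | Z ∈ 𝔤 ∧ ∀ W ∈ q, (Z * W).trace = 0}) :=
  stmt_17_general 𝔤 hΘ x xh hx E hE hdiag hx0 hcomm u q hu hq
end

section
/- Harish-Chandra lemma (orbit version): Let G be a reductive matrix Lie group, x ∈ 𝔤 ≅ 𝔤*, U = exp(𝔲) where 𝔲 is the sum of positive eigenspaces of ad(x_h), and 𝔮 = 𝔤^0 ⊕ 𝔲. Then the adjoint orbit U(x) equals the affine subspace x + ann(𝔮), where ann(𝔮) = 𝔲 is the trace-form annihilator of 𝔮. -/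
/-!
The eigenvalues of `ad x_h` grade `𝔤`, and the trace form pairs degree `a` only with degree `-a`
while being definite on the `Θ`-stable `𝔤`; hence the annihilator of `𝔮` in `𝔤` is `𝔲`. For
`W ∈ 𝔲`, `exp W * x * exp (-W) = exp (ad W) x` is `x` plus terms of positive degree in `𝔤`.
Conversely, `ad x` is injective in positive degree (the centralizer of `x` has degree `0`), hence
bijective on every filtration step `𝔤 ∩ F_c`, and `Φ V = exp V * x * exp (-V)` satisfies
`Φ (V + δ) ≡ Φ V + ⁅δ, x⁆` modulo `F_{c+s}` for `δ ∈ F_c`, where `s` is the least positive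
eigenvalue. Correcting `V` degree by degree solves `Φ V = x + Z` after finitely many steps, since
`F_c` vanishes for large `c`.
-/

attribute [local instance 100] LieRing.ofAssociativeRing

open Finset Module Module.End LieAlgebra
open scoped Nat

theorem Submodule.biSup_induction {R M ι : Type*} [Semiring R] [AddCommMonoid M] [Module R M]
    (p : ι → Submodule R M) (P : ι → Prop) {motive : M → Prop} {x : M}
    (hx : x ∈ ⨆ (i) (_ : P i), p i) (mem : ∀ i, P i → ∀ y ∈ p i, motive y) (zero : motive 0)
    (add : ∀ y z, motive y → motive z → motive (y + z)) : motive x :=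
  Submodule.iSup_induction (motive := motive) _ hx
    (fun i _ hy => Submodule.iSup_induction (motive := motive) _ hy (fun hi => mem i hi) zero add)
    zero add

/-- Successive approximation: correcting `V` by a solution of `ψ δ = Z ∈ F c` leaves a defect in
`F (c + s)`, and after finitely many such steps the defect lies in `F B = ⊥`. -/
theorem exists_apply_eq_add_of_approx {R M : Type*} [Ring R] [AddCommGroup M] [Module R M]
    {F : ℝ → Submodule R M} (hF : Antitone F) {s B : ℝ} (hs : 0 < s) (hB : F B = ⊥)
    (Φ ψ : M → M) (hψ : ∀ c ≥ s, ∀ Z ∈ F c, ∃ δ ∈ F c, ψ δ = Z)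
    (hΦ : ∀ V ∈ F s, ∀ c ≥ s, ∀ δ ∈ F c, Φ (V + δ) - Φ V - ψ δ ∈ F (c + s))
    {V Z : M} (hV : V ∈ F s) (hZ : Z ∈ F s) : ∃ V' ∈ F s, Φ V' = Φ V + Z := by
  suffices key : ∀ k : ℕ, ∀ c ≥ s, B ≤ c + k * s →
      ∀ V ∈ F s, ∀ Z ∈ F c, ∃ V' ∈ F s, Φ V' = Φ V + Z by
    obtain ⟨k, hk⟩ := exists_nat_ge ((B - s) / s)
    rw [div_le_iff₀ hs] at hk
    exact key k s le_rfl (by linarith) V hV Z hZ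
  intro k
  induction k with
  | zero =>
    intro c _ hc V hV Z hZ
    have hZ0 : Z ∈ F B := hF (by simpa using hc) hZ
    rw [hB, Submodule.mem_bot] at hZ0
    exact ⟨V, hV, by rw [hZ0, add_zero]⟩
  | succ k ih =>
    intro c hc hck V hV Z hZ
    obtain ⟨δ, hδ, rfl⟩ := hψ c hc Z hZ
    push_cast at hck
    obtain ⟨V', hV', hΦV'⟩ := ih (c + s) (by linarith) (by linarith) (V + δ)
      (add_mem hV (hF hc hδ)) _ (neg_mem (hΦ V hV c hc δ hδ))
    exact ⟨V', hV', by rw [hΦV']; abel⟩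

namespace Module.End

variable {M : Type*} [AddCommGroup M] [Module ℝ M] (f : End ℝ M)

def eigenFiltration (c : ℝ) : Submodule ℝ M :=
  ⨆ (a) (_ : c ≤ a), f.eigenspace a

theorem eigenspace_le_eigenFiltration {a c : ℝ} (h : c ≤ a) :
    f.eigenspace a ≤ f.eigenFiltration c :=
  le_iSup₂ (f := fun a (_ : c ≤ a) => f.eigenspace a) a h

theorem eigenFiltration_antitone : Antitone f.eigenFiltration :=
  fun _ _ h => biSup_mono fun _ => h.trans

theorem disjoint_eigenspace_eigenFiltration {a c : ℝ} (h : a < c) :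
    Disjoint (f.eigenspace a) (f.eigenFiltration c) :=
  f.eigenspaces_iSupIndep.disjoint_biSup (y := {b | c ≤ b}) (not_le.2 h)

theorem biSup_pos_inf_eigenspace_eq_inf_eigenFiltration {V : Submodule ℝ M}
    (hdiag : ⨆ a, V ⊓ f.eigenspace a = V) {s : ℝ} (hs : 0 < s)
    (hgap : ∀ a > 0, f.eigenspace a ≤ f.eigenFiltration s) :
    ⨆ (a) (_ : 0 < a), V ⊓ f.eigenspace a = V ⊓ f.eigenFiltration s := by
  refine le_antisymm (iSup₂_le fun a ha => inf_le_inf_left _ (hgap a ha)) ?_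
  rintro Z ⟨hZ, hZs⟩
  rw [← hdiag, iSup_split _ (0 < ·)] at hZ
  obtain ⟨Zp, hZp, Zn, hZn, rfl⟩ := Submodule.mem_sup.1 hZ
  have hZps : Zp ∈ f.eigenFiltration s := iSup₂_le (fun a ha => inf_le_right.trans (hgap a ha)) hZp
  have hZns : Zn ∈ f.eigenFiltration s := by simpa using sub_mem hZs hZps
  have hZn0 : Zn = 0 := Submodule.disjoint_def.1
    (f.eigenspaces_iSupIndep.disjoint_biSup_biSup (s := {a | ¬0 < a}) (t := {a | s ≤ a})
      (Set.disjoint_left.2 fun a ha ha' => ha (hs.trans_le ha'))) _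
    (SetLike.le_def.1 (iSup₂_mono fun a _ => inf_le_right) hZn) hZns
  simpa [hZn0] using hZp

variable [FiniteDimensional ℝ M]

theorem exists_eigenFiltration_eq_bot : ∃ B, f.eigenFiltration B = ⊥ := by
  obtain ⟨B, hB⟩ := f.finite_hasEigenvalue.bddAbove
  refine ⟨B + 1, eq_bot_iff.2 (iSup₂_le fun a ha => le_bot_iff.2 ?_)⟩
  by_contra hne
  linarith [hB (hasEigenvalue_iff.2 hne)]

theorem exists_pos_eigenspace_le_eigenFiltration :
    ∃ s > 0, ∀ a > 0, f.eigenspace a ≤ f.eigenFiltration s := by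
  set P := {a | f.HasEigenvalue a ∧ 0 < a}
  obtain ⟨s, hs, hsP⟩ : ∃ s > 0, ∀ a ∈ P, s ≤ a := by
    rcases P.eq_empty_or_nonempty with hP | hP
    · exact ⟨1, one_pos, by simp [hP]⟩
    · obtain ⟨s, hs, hmin⟩ :=
        P.exists_min_image id (f.finite_hasEigenvalue.subset fun _ h => h.1) hP
      exact ⟨s, hs.2, hmin⟩
  refine ⟨s, hs, fun a ha => ?_⟩
  by_cases h : f.HasEigenvalue a
  · exact f.eigenspace_le_eigenFiltration (hsP a ⟨h, ha⟩)
  · rw [hasEigenvalue_iff, not_ne_iff] at h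
    simp [h]

end Module.End

theorem mul_mem_eigenspace_ad {R A : Type*} [CommRing R] [Ring A] [Algebra R A] {h X Y : A}
    {a b : R} (hX : X ∈ (ad R A h).eigenspace a) (hY : Y ∈ (ad R A h).eigenspace b) :
    X * Y ∈ (ad R A h).eigenspace (a + b) := by
  rw [mem_eigenspace_iff, ad_apply, Ring.lie_def] at hX hY ⊢
  calc h * (X * Y) - X * Y * h = (h * X - X * h) * Y + X * (h * Y - Y * h) := by noncomm_ring
    _ = (a + b) • (X * Y) := by rw [hX, hY, smul_mul_assoc, mul_smul_comm, add_smul]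

section Filtration

variable {A : Type*} [Ring A] [Algebra ℝ A] {h : A}

theorem mul_mem_eigenFiltration_ad {X Y : A} {c d : ℝ} (hX : X ∈ (ad ℝ A h).eigenFiltration c)
    (hY : Y ∈ (ad ℝ A h).eigenFiltration d) : X * Y ∈ (ad ℝ A h).eigenFiltration (c + d) := by
  refine Submodule.biSup_induction (motive := fun X => X * Y ∈ _) _ _ hX
    (fun a ha X hX => ?_) (by simp) fun X X' hX hX' => by
      simpa only [add_mul] using add_mem hX hX'
  refine Submodule.biSup_induction (motive := fun Y => X * Y ∈ _) _ _ hY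
    (fun b hb Y hY => ?_) (by simp) fun Y Y' hY hY' => by
      simpa only [mul_add] using add_mem hY hY'
  exact eigenspace_le_eigenFiltration _ (add_le_add ha hb) (mul_mem_eigenspace_ad hX hY)

theorem lie_mem_eigenFiltration_ad {X Y : A} {c d : ℝ} (hX : X ∈ (ad ℝ A h).eigenFiltration c)
    (hY : Y ∈ (ad ℝ A h).eigenFiltration d) : ⁅X, Y⁆ ∈ (ad ℝ A h).eigenFiltration (c + d) := by
  rw [Ring.lie_def]
  exact sub_mem (mul_mem_eigenFiltration_ad hX hY)
    (add_comm c d ▸ mul_mem_eigenFiltration_ad hY hX)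

theorem pow_mem_eigenFiltration_ad {X : A} {c : ℝ} (hX : X ∈ (ad ℝ A h).eigenFiltration c)
    (k : ℕ) : X ^ k ∈ (ad ℝ A h).eigenFiltration (k * c) := by
  induction k with
  | zero =>
    refine eigenspace_le_eigenFiltration _ (a := 0) (by simp) ?_
    simp [Ring.lie_def]
  | succ k ih =>
    rw [pow_succ]
    convert mul_mem_eigenFiltration_ad ih hX using 2
    push_cast; ring

theorem exists_pow_eq_zero_of_mem_eigenFiltration_ad {B s : ℝ}
    (hB : (ad ℝ A h).eigenFiltration B = ⊥) (hs : 0 < s) :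
    ∃ m : ℕ, ∀ X ∈ (ad ℝ A h).eigenFiltration s, X ^ m = 0 := by
  obtain ⟨m, hm⟩ := exists_nat_ge (B / s)
  refine ⟨m, fun X hX => ?_⟩
  have hle : B ≤ m * s := by rwa [div_le_iff₀ hs] at hm
  simpa [hB] using eigenFiltration_antitone _ hle (pow_mem_eigenFiltration_ad hX m)

section FiniteDimensional

variable [FiniteDimensional ℝ A] (𝔤 : LieSubalgebra ℝ A) {x : A}

theorem exists_lie_eq_of_mem_inf_eigenFiltration_ad (hx : x ∈ 𝔤)
    (hx0 : x ∈ (ad ℝ A h).eigenspace 0)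
    (hcomm : ∀ Z ∈ 𝔤, ⁅x, Z⁆ = 0 → Z ∈ (ad ℝ A h).eigenspace 0) {c : ℝ} (hc : 0 < c) {Z : A}
    (hZ : Z ∈ 𝔤.toSubmodule ⊓ (ad ℝ A h).eigenFiltration c) :
    ∃ δ ∈ 𝔤.toSubmodule ⊓ (ad ℝ A h).eigenFiltration c, ⁅δ, x⁆ = Z := by
  set P := 𝔤.toSubmodule ⊓ (ad ℝ A h).eigenFiltration c
  have hmaps : ∀ δ ∈ P, (-ad ℝ A x) δ ∈ P := fun δ hδ => by
    rw [LinearMap.neg_apply, ad_apply, lie_skew]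
    exact ⟨𝔤.lie_mem hδ.1 hx,
      add_zero c ▸ lie_mem_eigenFiltration_ad hδ.2 (eigenspace_le_eigenFiltration _ le_rfl hx0)⟩
  have hinj : Set.InjOn (-ad ℝ A x) P := by
    intro δ₁ h₁ δ₂ h₂ heq
    have hmem : δ₁ - δ₂ ∈ P := sub_mem h₁ h₂
    rw [← sub_eq_zero]
    refine Submodule.disjoint_def.1 (disjoint_eigenspace_eigenFiltration _ hc) _
      (hcomm _ hmem.1 ?_) hmem.2
    have hlie : ⁅δ₁ - δ₂, x⁆ = 0 := by simpa [sub_lie, sub_eq_zero] using heq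
    rw [← lie_skew, hlie, neg_zero]
  obtain ⟨δ, hδ, hδZ⟩ := (LinearMap.injOn_iff_surjOn hmaps).1 hinj hZ
  exact ⟨δ, hδ, by simpa [lie_skew] using hδZ⟩

end FiniteDimensional

variable [Algebra ℚ A]

theorem ad_pow_mem_eigenFiltration_ad {V Y : A} {s d : ℝ}
    (hV : V ∈ (ad ℝ A h).eigenFiltration s) (hY : Y ∈ (ad ℝ A h).eigenFiltration d) (k : ℕ) :
    (ad ℚ A V ^ k) Y ∈ (ad ℝ A h).eigenFiltration (d + k * s) := by
  induction k with
  | zero => simpa using hY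
  | succ k ih =>
    rw [pow_succ', Module.End.mul_apply, ad_apply]
    convert lie_mem_eigenFiltration_ad hV ih using 2
    push_cast; ring

theorem ad_add_pow_sub_ad_pow_mem_eigenFiltration_ad {V δ Y : A} {s c d : ℝ}
    (hV : V ∈ (ad ℝ A h).eigenFiltration s) (hδ : δ ∈ (ad ℝ A h).eigenFiltration c)
    (hsc : s ≤ c) (hY : Y ∈ (ad ℝ A h).eigenFiltration d) (k : ℕ) :
    (ad ℚ A (V + δ) ^ (k + 1)) Y - (ad ℚ A V ^ (k + 1)) Y
      ∈ (ad ℝ A h).eigenFiltration (d + c + k * s) := by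
  induction k with
  | zero => simpa [add_lie, add_comm c d] using lie_mem_eigenFiltration_ad hδ hY
  | succ k ih =>
    have hVδ := add_mem hV (eigenFiltration_antitone _ hsc hδ)
    have hsucc (W : A) : (ad ℚ A W ^ (k + 1 + 1)) Y = ⁅W, (ad ℚ A W ^ (k + 1)) Y⁆ := by
      rw [pow_succ' _ (k + 1), Module.End.mul_apply, ad_apply]
    have hsplit (P Q : A) : ⁅V + δ, P⁆ - ⁅V, Q⁆ = ⁅V + δ, P - Q⁆ + ⁅δ, Q⁆ := by
      rw [lie_sub, add_lie, add_lie]; abel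
    rw [hsucc, hsucc, hsplit]
    refine add_mem ?_ ?_
    · convert lie_mem_eigenFiltration_ad hVδ ih using 2
      push_cast; ring
    · convert lie_mem_eigenFiltration_ad hδ (ad_pow_mem_eigenFiltration_ad hV hY (k + 1)) using 2
      push_cast; ring

end Filtration

section Exponential

variable {A : Type*} [Ring A] [Algebra ℚ A] [TopologicalSpace A] [IsTopologicalRing A]

theorem NormedSpace.exp_eq_sum_of_pow_eq_zero {a : A} {m : ℕ} (ha : a ^ m = 0) :
    NormedSpace.exp a = ∑ i ∈ range m, (i ! : ℚ)⁻¹ • a ^ i := by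
  rw [NormedSpace.exp_eq_tsum_rat]
  exact tsum_eq_sum fun i hi => by
    rw [pow_eq_zero_of_le (by simpa using hi) ha, smul_zero]

/-- `ad a = L + R` for the commuting nilpotent multiplications `L = (a * ·)` and `R = (· * -a)`,
and `exp (ad a) = exp L * exp R`. -/
theorem exp_mul_mul_exp_neg_eq_sum_ad_pow {a : A} {m N : ℕ} (ha : a ^ m = 0) (hN : 2 * m ≤ N)
    (b : A) : NormedSpace.exp a * b * NormedSpace.exp (-a)
      = ∑ k ∈ range N, (k ! : ℚ)⁻¹ • (ad ℚ A a ^ k) b := by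
  set L := LinearMap.mulLeft ℚ a
  set R := LinearMap.mulRight ℚ (-a)
  have hL : L ^ m = 0 := by rw [LinearMap.pow_mulLeft, ha, LinearMap.mulLeft_zero_eq_zero]
  have hna : (-a) ^ m = 0 := by rw [neg_pow, ha, mul_zero]
  have hR : R ^ m = 0 := by rw [LinearMap.pow_mulRight, hna, LinearMap.mulRight_zero_eq_zero]
  have hLR : Commute L R := LinearMap.commute_mulLeft_right a (-a)
  have had : ad ℚ A a = L + R := by
    ext c; simp [L, R, Ring.lie_def, sub_eq_add_neg]
  have hexpL (c : A) : IsNilpotent.exp L c = NormedSpace.exp a * c := by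
    simp [IsNilpotent.exp_eq_sum hL, NormedSpace.exp_eq_sum_of_pow_eq_zero ha, L,
      LinearMap.pow_mulLeft, Finset.sum_mul]
  have hexpR (c : A) : IsNilpotent.exp R c = c * NormedSpace.exp (-a) := by
    simp [IsNilpotent.exp_eq_sum hR, NormedSpace.exp_eq_sum_of_pow_eq_zero hna, R,
      LinearMap.pow_mulRight, Finset.mul_sum]
  have hnil : ad ℚ A a ^ N = 0 := by
    rw [had]
    exact hLR.add_pow_eq_zero_of_add_le_succ_of_pow_eq_zero hL hR (by omega)
  have hexp := congrArg (· b) (IsNilpotent.exp_add_of_commute hLR ⟨m, hL⟩ ⟨m, hR⟩)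
  simp only [Module.End.mul_apply, hexpR, hexpL, ← had, IsNilpotent.exp_eq_sum hnil] at hexp
  simpa [mul_assoc] using hexp.symm

theorem exp_mul_mul_exp_neg_mem_lieSubalgebra [Algebra ℝ A] [IsScalarTower ℚ ℝ A]
    (𝔤 : LieSubalgebra ℝ A) {V x : A} (hV : V ∈ 𝔤) (hx : x ∈ 𝔤) {m : ℕ} (hm : V ^ m = 0) :
    NormedSpace.exp V * x * NormedSpace.exp (-V) ∈ 𝔤 := by
  have hpow (k : ℕ) : (ad ℚ A V ^ k) x ∈ 𝔤 := by
    induction k with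
    | zero => exact hx
    | succ k ih =>
      rw [pow_succ', Module.End.mul_apply, ad_apply]
      exact 𝔤.lie_mem hV ih
  rw [exp_mul_mul_exp_neg_eq_sum_ad_pow hm le_rfl]
  exact sum_mem fun k _ => 𝔤.toSubmodule.smul_of_tower_mem _ (hpow k)

end Exponential

section Orbit

variable {A : Type*} [Ring A] [Algebra ℝ A] [Algebra ℚ A] [IsScalarTower ℚ ℝ A]
  [TopologicalSpace A] [IsTopologicalRing A] {h : A}

/-- The terms of degree `0` and `1` of the two `ad`-series give `⁅δ, x⁆`; every other term of the
difference contains `δ` and at least one further factor `V` or `δ` of degree `≥ s`. -/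
theorem exp_conj_add_sub_exp_conj_sub_lie_mem_eigenFiltration_ad {B s c : ℝ} {V δ x : A}
    (hB : (ad ℝ A h).eigenFiltration B = ⊥) (hs : 0 < s) (hsc : s ≤ c)
    (hV : V ∈ (ad ℝ A h).eigenFiltration s) (hδ : δ ∈ (ad ℝ A h).eigenFiltration c)
    (hx : x ∈ (ad ℝ A h).eigenFiltration 0) :
    NormedSpace.exp (V + δ) * x * NormedSpace.exp (-(V + δ))
      - NormedSpace.exp V * x * NormedSpace.exp (-V) - ⁅δ, x⁆
      ∈ (ad ℝ A h).eigenFiltration (c + s) := by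
  obtain ⟨m, hm⟩ := exists_pow_eq_zero_of_mem_eigenFiltration_ad hB hs
  have hVδ := add_mem hV (eigenFiltration_antitone _ hsc hδ)
  rw [exp_mul_mul_exp_neg_eq_sum_ad_pow (hm _ hVδ) (N := 2 * m + 2) (by omega),
    exp_mul_mul_exp_neg_eq_sum_ad_pow (hm _ hV) (N := 2 * m + 2) (by omega),
    ← sum_sub_distrib, sum_range_succ', sum_range_succ']
  simp only [← smul_sub, zero_add, pow_zero, pow_one, ad_apply, add_lie, Module.End.one_apply,
    sub_self, add_zero, Nat.factorial_zero, Nat.factorial_one, Nat.cast_one, inv_one,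
    one_smul, add_sub_cancel_left, add_sub_cancel_right]
  refine sum_mem fun k _ => Submodule.smul_of_tower_mem _ (_ : ℚ) ?_
  refine eigenFiltration_antitone _ ?_
    (ad_add_pow_sub_ad_pow_mem_eigenFiltration_ad hV hδ hsc hx (k + 1))
  push_cast
  nlinarith [k.cast_nonneg (α := ℝ)]

variable (𝔤 : LieSubalgebra ℝ A) {x : A}

theorem exp_conj_sub_mem_inf_eigenFiltration_ad {B s : ℝ} {W : A}
    (hB : (ad ℝ A h).eigenFiltration B = ⊥) (hs : 0 < s) (hx : x ∈ 𝔤)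
    (hx0 : x ∈ (ad ℝ A h).eigenFiltration 0)
    (hW : W ∈ 𝔤.toSubmodule ⊓ (ad ℝ A h).eigenFiltration s) :
    NormedSpace.exp W * x * NormedSpace.exp (-W) - x
      ∈ 𝔤.toSubmodule ⊓ (ad ℝ A h).eigenFiltration s := by
  obtain ⟨m, hm⟩ := exists_pow_eq_zero_of_mem_eigenFiltration_ad hB hs
  refine ⟨sub_mem (exp_mul_mul_exp_neg_mem_lieSubalgebra 𝔤 hW.1 hx (hm _ hW.2)) hx, ?_⟩
  have herr := exp_conj_add_sub_exp_conj_sub_lie_mem_eigenFiltration_ad hB hs le_rfl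
    (zero_mem _) hW.2 hx0
  simp only [zero_add, neg_zero, NormedSpace.exp_zero, one_mul, mul_one] at herr
  have hsum := add_mem (eigenFiltration_antitone _ (by linarith) herr)
    (add_zero s ▸ lie_mem_eigenFiltration_ad hW.2 hx0)
  rwa [sub_add_cancel] at hsum

variable [FiniteDimensional ℝ A]

theorem exists_exp_conj_eq_add_of_mem_inf_eigenFiltration_ad {B s : ℝ}
    (hB : (ad ℝ A h).eigenFiltration B = ⊥) (hs : 0 < s) (hx : x ∈ 𝔤)
    (hx0 : x ∈ (ad ℝ A h).eigenspace 0)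
    (hcomm : ∀ Z ∈ 𝔤, ⁅x, Z⁆ = 0 → Z ∈ (ad ℝ A h).eigenspace 0) {Z : A}
    (hZ : Z ∈ 𝔤.toSubmodule ⊓ (ad ℝ A h).eigenFiltration s) :
    ∃ V ∈ 𝔤.toSubmodule ⊓ (ad ℝ A h).eigenFiltration s,
      NormedSpace.exp V * x * NormedSpace.exp (-V) = x + Z := by
  have hxF := eigenspace_le_eigenFiltration _ le_rfl hx0
  obtain ⟨m, hm⟩ := exists_pow_eq_zero_of_mem_eigenFiltration_ad hB hs
  have hΦ𝔤 {V} (hV : V ∈ 𝔤.toSubmodule ⊓ (ad ℝ A h).eigenFiltration s) :=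
    exp_mul_mul_exp_neg_mem_lieSubalgebra 𝔤 hV.1 hx (hm _ hV.2)
  have hFs {c} (hc : s ≤ c) :=
    inf_le_inf_left 𝔤.toSubmodule ((ad ℝ A h).eigenFiltration_antitone hc)
  obtain ⟨V, hV, hΦV⟩ := exists_apply_eq_add_of_approx
    (F := fun c => 𝔤.toSubmodule ⊓ (ad ℝ A h).eigenFiltration c)
    (fun _ _ hcd => inf_le_inf_left _ (eigenFiltration_antitone _ hcd)) hs
    (by rw [hB, inf_bot_eq])
    (fun V => NormedSpace.exp V * x * NormedSpace.exp (-V)) (fun δ => ⁅δ, x⁆)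
    (fun c hc _ hZ => exists_lie_eq_of_mem_inf_eigenFiltration_ad 𝔤 hx hx0 hcomm
      (hs.trans_le hc) hZ)
    (fun V hV c hc δ hδ =>
      ⟨sub_mem (sub_mem (hΦ𝔤 (add_mem hV (hFs hc hδ))) (hΦ𝔤 hV)) (𝔤.lie_mem hδ.1 hx),
      exp_conj_add_sub_exp_conj_sub_lie_mem_eigenFiltration_ad hB hs hc hV.2 hδ.2 hxF⟩)
    (zero_mem _) hZ
  refine ⟨V, hV, ?_⟩
  simpa using hΦV

end Orbit

namespace Matrix

variable {ι : Type*} [Fintype ι]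

theorem eq_zero_of_forall_trace_mul_eq_zero {𝔤 : Submodule ℝ (Matrix ι ι ℝ)}
    (hΘ : ∀ Z ∈ 𝔤, Zᵀ ∈ 𝔤) {Z : Matrix ι ι ℝ} (hZ : Z ∈ 𝔤) (h : ∀ Y ∈ 𝔤, (Z * Y).trace = 0) :
    Z = 0 :=
  trace_mul_conjTranspose_self_eq_zero_iff.1 <| by
    simpa [conjTranspose_eq_transpose_of_trivial] using h _ (hΘ Z hZ)

variable [DecidableEq ι]

theorem trace_mul_eq_zero_of_mem_eigenspace_ad {𝕜 : Type*} [Field 𝕜] {h X Y : Matrix ι ι 𝕜}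
    {a b : 𝕜} (hX : X ∈ (ad 𝕜 _ h).eigenspace a) (hY : Y ∈ (ad 𝕜 _ h).eigenspace b)
    (hab : a + b ≠ 0) : (X * Y).trace = 0 := by
  have hXY := mul_mem_eigenspace_ad hX hY
  rw [mem_eigenspace_iff, ad_apply, Ring.lie_def] at hXY
  have : (a + b) * (X * Y).trace = 0 := by
    rw [← smul_eq_mul, ← trace_smul, ← hXY, trace_sub, trace_mul_comm, sub_self]
  exact (mul_eq_zero.1 this).resolve_left hab

theorem trace_mul_eq_zero_of_mem_biSup_eigenspace_ad {𝕜 : Type*} [Field 𝕜]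
    {h X Y : Matrix ι ι 𝕜} {p q : 𝕜 → Prop} (hX : X ∈ ⨆ (a) (_ : p a), (ad 𝕜 _ h).eigenspace a)
    (hY : Y ∈ ⨆ (b) (_ : q b), (ad 𝕜 _ h).eigenspace b) (hpq : ∀ a b, p a → q b → a + b ≠ 0) :
    (X * Y).trace = 0 := by
  refine Submodule.biSup_induction (motive := fun X => (X * Y).trace = 0) _ _ hX
    (fun a ha X hX => ?_) (by simp) fun X X' hX hX' => by
      rw [add_mul, trace_add, hX, hX', add_zero]
  refine Submodule.biSup_induction (motive := fun Y => (X * Y).trace = 0) _ _ hY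
    (fun b hb Y hY => ?_) (by simp) fun Y Y' hY hY' => by
      rw [mul_add, trace_add, hY, hY', add_zero]
  exact trace_mul_eq_zero_of_mem_eigenspace_ad hX hY (hpq a b ha hb)

/-- The trace form pairs the `a`-eigenspace of `ad h` on `𝔤` only with the `-a`-eigenspace, and
it is definite on the `Θ`-stable `𝔤`; so a `Z` orthogonal to all eigenspaces with `a ≥ 0` has no
components with `a ≤ 0`. -/
theorem mem_biSup_pos_of_forall_trace_mul_eq_zero {𝔤 : Submodule ℝ (Matrix ι ι ℝ)}
    (hΘ : ∀ Z ∈ 𝔤, Zᵀ ∈ 𝔤) {h : Matrix ι ι ℝ} (hdiag : ⨆ a, 𝔤 ⊓ (ad ℝ _ h).eigenspace a = 𝔤)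
    {Z : Matrix ι ι ℝ} (hZ : Z ∈ 𝔤)
    (horth : ∀ Y ∈ 𝔤 ⊓ (ad ℝ _ h).eigenspace 0 ⊔ ⨆ (a) (_ : 0 < a), 𝔤 ⊓ (ad ℝ _ h).eigenspace a,
      (Z * Y).trace = 0) :
    Z ∈ ⨆ (a) (_ : 0 < a), 𝔤 ⊓ (ad ℝ _ h).eigenspace a := by
  have hK (p : ℝ → Prop) :
      ⨆ (a) (_ : p a), 𝔤 ⊓ (ad ℝ _ h).eigenspace a ≤ ⨆ (a) (_ : p a), (ad ℝ _ h).eigenspace a :=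
    iSup₂_mono fun _ _ => inf_le_right
  rw [← hdiag, iSup_split _ (0 < ·)] at hZ
  obtain ⟨Zp, hZp, Zn, hZn, rfl⟩ := Submodule.mem_sup.1 hZ
  suffices Zn = 0 by simpa [this] using hZp
  refine eq_zero_of_forall_trace_mul_eq_zero hΘ
    (SetLike.le_def.1 (iSup₂_le fun _ _ => inf_le_left) hZn) fun Y hY => ?_
  rw [← hdiag, iSup_split _ (0 ≤ ·)] at hY
  obtain ⟨Yp, hYp, Yn, hYn, rfl⟩ := Submodule.mem_sup.1 hY
  have hpp : (Zp * Yp).trace = 0 := trace_mul_eq_zero_of_mem_biSup_eigenspace_ad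
    (hK _ hZp) (hK _ hYp) fun a b ha hb => by linarith
  have hnn : (Zn * Yn).trace = 0 := trace_mul_eq_zero_of_mem_biSup_eigenspace_ad
    (hK _ hZn) (hK _ hYn) fun a b ha hb => by simp only [not_lt, not_le] at ha hb; linarith
  have hq : ⨆ (a) (_ : 0 ≤ a), 𝔤 ⊓ (ad ℝ _ h).eigenspace a
      ≤ 𝔤 ⊓ (ad ℝ _ h).eigenspace 0 ⊔ ⨆ (a) (_ : 0 < a), 𝔤 ⊓ (ad ℝ _ h).eigenspace a := by
    refine iSup₂_le fun a ha => ?_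
    rcases ha.eq_or_lt with rfl | ha
    · exact le_sup_left
    · exact le_sup_of_le_right (le_iSup₂_of_le a ha le_rfl)
  have hp := horth Yp (hq hYp)
  rw [add_mul, trace_add, hpp, zero_add] at hp
  rw [mul_add, trace_add, hp, hnn, add_zero]

end Matrix

theorem stmt_18_general {n : ℕ}
    (𝔤 : LieSubalgebra ℝ (Matrix (Fin n) (Fin n) ℝ))
    (hΘ : ∀ Z ∈ 𝔤, Z.transpose ∈ 𝔤)
    (x xh : Matrix (Fin n) (Fin n) ℝ)
    (E : ℝ → Submodule ℝ (Matrix (Fin n) (Fin n) ℝ))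
    (hE : ∀ a, E a = (𝔤 : Submodule ℝ (Matrix (Fin n) (Fin n) ℝ)) ⊓
      LinearMap.ker (LieAlgebra.ad ℝ (Matrix (Fin n) (Fin n) ℝ) xh
        - a • LinearMap.id))
    (hdiag : (⨆ a : ℝ, E a) = (𝔤 : Submodule ℝ (Matrix (Fin n) (Fin n) ℝ)))
    (hx0 : x ∈ E 0)
    (hcomm : ∀ Z ∈ 𝔤, ⁅x, Z⁆ = 0 → Z ∈ E 0)
    (u q : Submodule ℝ (Matrix (Fin n) (Fin n) ℝ))
    (hu : u = ⨆ a : ℝ, ⨆ _ : 0 < a, E a)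
    (hq : q = E 0 ⊔ u) :
    -- U(x) = x + ann(𝔮):
    {y | ∃ W ∈ u, y = NormedSpace.exp W * x * (NormedSpace.exp W)⁻¹}
      = {y | ∃ Z, (Z ∈ 𝔤 ∧ ∀ W ∈ q, (Z * W).trace = 0) ∧ y = x + Z} := by
  set f := ad ℝ (Matrix (Fin n) (Fin n) ℝ) xh
  obtain rfl : E = fun a => 𝔤.toSubmodule ⊓ f.eigenspace a :=
    funext fun a => by rw [hE, eigenspace_def]; rfl
  subst hu hq
  obtain ⟨B, hB⟩ := f.exists_eigenFiltration_eq_bot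
  obtain ⟨s, hs, hgap⟩ := f.exists_pos_eigenspace_le_eigenFiltration
  have hu := f.biSup_pos_inf_eigenspace_eq_inf_eigenFiltration hdiag hs hgap
  have hxF := f.eigenspace_le_eigenFiltration le_rfl hx0.2
  ext y
  constructor
  · rintro ⟨W, hW, rfl⟩
    have hWx := exp_conj_sub_mem_inf_eigenFiltration_ad 𝔤 hB hs hx0.1 hxF (hu ▸ hW)
    refine ⟨_, ⟨hWx.1, fun V hV => ?_⟩, by rw [← Matrix.exp_neg, add_sub_cancel]⟩
    have hq : V ∈ f.eigenFiltration 0 := SetLike.le_def.1 (sup_le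
      (inf_le_right.trans (f.eigenspace_le_eigenFiltration le_rfl))
      (iSup₂_le fun a ha => inf_le_right.trans (f.eigenspace_le_eigenFiltration ha.le))) hV
    exact Matrix.trace_mul_eq_zero_of_mem_biSup_eigenspace_ad (p := (s ≤ ·)) (q := (0 ≤ ·))
      hWx.2 hq fun a b ha hb => by linarith
  · rintro ⟨Z, ⟨hZ, horth⟩, rfl⟩
    have hZu := Matrix.mem_biSup_pos_of_forall_trace_mul_eq_zero hΘ hdiag hZ horth
    obtain ⟨V, hV, hVZ⟩ := exists_exp_conj_eq_add_of_mem_inf_eigenFiltration_ad 𝔤 hB hs hx0.1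
      hx0.2 (fun Z hZ h0 => (hcomm Z hZ h0).2) (hu ▸ hZu)
    exact ⟨V, hu ▸ hV, by rw [← Matrix.exp_neg, hVZ]⟩

theorem stmt_18 {n : ℕ}
    (𝔤 : LieSubalgebra ℝ (Matrix (Fin n) (Fin n) ℝ))
    (hΘ : ∀ Z ∈ 𝔤, Z.transpose ∈ 𝔤)
    (x xh : Matrix (Fin n) (Fin n) ℝ) (hx : x ∈ 𝔤) (hxh : xh ∈ 𝔤)
    (E : ℝ → Submodule ℝ (Matrix (Fin n) (Fin n) ℝ))
    (hE : ∀ a, E a = (𝔤 : Submodule ℝ (Matrix (Fin n) (Fin n) ℝ)) ⊓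
      LinearMap.ker (LieAlgebra.ad ℝ (Matrix (Fin n) (Fin n) ℝ) xh
        - a • LinearMap.id))
    (hdiag : (⨆ a : ℝ, E a) = (𝔤 : Submodule ℝ (Matrix (Fin n) (Fin n) ℝ)))
    (hx0 : x ∈ E 0)
    (hcomm : ∀ Z ∈ 𝔤, ⁅x, Z⁆ = 0 → Z ∈ E 0)
    (u q : Submodule ℝ (Matrix (Fin n) (Fin n) ℝ))
    (hu : u = ⨆ a : ℝ, ⨆ _ : 0 < a, E a)
    (hq : q = E 0 ⊔ u) :
    -- U(x) = x + ann(𝔮):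
    {y | ∃ W ∈ u, y = NormedSpace.exp W * x * (NormedSpace.exp W)⁻¹}
      = {y | ∃ Z, (Z ∈ 𝔤 ∧ ∀ W ∈ q, (Z * W).trace = 0) ∧ y = x + Z} :=
  stmt_18_general 𝔤 hΘ x xh E hE hdiag hx0 hcomm u q hu hq
end
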